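/- Let G be a strongly connected directed graph containing two vertex-disjoint forts F₁ and F₂, where a fort is a nonempty subset F of vertices such that every vertex of F has at least one in-neighbor in F. Then for every k ∈ ℕ there exists an assignment of positive weights to the edges of G such that ept_rzf(G) > k; that is, the expected propagation time can be made arbitrarily large by the choice of weights. -/

import Mathlib

open scoped ENNReal NNReal

namespace RZF

variable {V : Type*} [Fintype V] [DecidableEq V]

/-- Probability that the white vertex `x` turns blue in one round of weighted
randomized zero forcing with weights `w`, given the current blue set `B`
(`0` when the total incoming weight of `x` is `0`). -/
noncomputable def turnProb (w : V → V → ℝ≥0) (B : Finset V) (x : V) : ℝ≥0 :=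
  (∑ u ∈ B, w u x) / ∑ u, w u x

/-- One-round transition probability of the RZF Markov chain from blue set `B`
to blue set `C`: each white vertex independently turns blue with probability
`turnProb w B ·`, and blue vertices stay blue. -/
noncomputable def stepProb (w : V → V → ℝ≥0) (B C : Finset V) : ℝ≥0∞ :=
  if B ⊆ C then
    (∏ x ∈ C \ B, (turnProb w B x : ℝ≥0∞)) *
      ∏ x ∈ Cᶜ, (1 - (turnProb w B x : ℝ≥0∞))
  else 0

/-- Distribution of the blue set after `t` rounds, started from `S`. -/
noncomputable def state (w : V → V → ℝ≥0) (S : Finset V) : ℕ → Finset V → ℝ≥0∞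
  | 0 => fun C => if C = S then 1 else 0
  | t + 1 => fun C => ∑ B : Finset V, state w S t B * stepProb w B C

/-- Expected propagation time `∑ₜ P(Bₜ ≠ V(G))`; this equals `E[τ]` when the
all-blue state is reachable from `S`, and `∞` otherwise. -/
noncomputable def ept (w : V → V → ℝ≥0) (S : Finset V) : ℝ≥0∞ :=
  ∑' t : ℕ, ∑ C ∈ Finset.univ.filter (fun C : Finset V => C ≠ Finset.univ),
    state w S t C

/-- Minimum expected propagation time over singleton starting sets. -/
noncomputable def eptMin (w : V → V → ℝ≥0) : ℝ≥0∞ :=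
  ⨅ v : V, ept w {v}

/-- The weight function of an unweighted directed graph: weight `1` on each
edge and `0` otherwise, so that `turnProb` is the fraction of in-neighbors
that are blue. -/
def unweight (adj : V → V → Prop) [DecidableRel adj] : V → V → ℝ≥0 :=
  fun u v => if adj u v then 1 else 0

end RZF

/-- `reachIn adj t a b` : there is a directed path of length at most `t`
from `a` to `b` in the directed graph with adjacency relation `adj`. -/
def reachIn {V : Type*} (adj : V → V → Prop) : ℕ → V → V → Prop
  | 0, a, b => a = b
  | t + 1, a, b => reachIn adj t a b ∨ ∃ c, reachIn adj t a c ∧ adj c b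

/-!
Put weight `N` on the edges inside each fort and weight `1` on all other edges. While the
blue set `B` misses a fort `F`, a vertex of `F` has an in-neighbour of weight `N` in `F` but
receives weight at most `|V|` from `B`, so it turns blue with probability at most `|V| / N`.
A singleton start misses one of the two disjoint forts, which therefore stays white for `k`
rounds with probability at least `(1 - |V| / N) ^ (|V| k)`. Hence
`ept ≥ (k + 1) (1 - |V| / N) ^ (|V| k)`, and the right-hand side exceeds `k` once `N` is large.
-/

namespace RZF

open Finset Filter Topology

variable {V : Type*}

open Classical in
noncomputable def fortWeight (adj : V → V → Prop) (F₁ F₂ : Finset V) (N : ℝ≥0) :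
    V → V → ℝ≥0 :=
  fun u v => if adj u v then if u ∈ F₁ ∧ v ∈ F₁ ∨ u ∈ F₂ ∧ v ∈ F₂ then N else 1 else 0

variable {adj : V → V → Prop} {F₁ F₂ : Finset V} {N : ℝ≥0}

lemma fortWeight_pos_iff (hN : 0 < N) (u v : V) :
    0 < fortWeight adj F₁ F₂ N u v ↔ adj u v := by
  unfold fortWeight
  split_ifs <;> simp [*]

lemma fortWeight_comm : fortWeight adj F₁ F₂ N = fortWeight adj F₂ F₁ N := by
  funext u v
  simp only [fortWeight]
  split_ifs <;> tauto

variable [Fintype V]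

lemma turnProb_le_one (w : V → V → ℝ≥0) (B : Finset V) (x : V) : turnProb w B x ≤ 1 :=
  div_le_one_of_le₀ (sum_le_sum_of_subset (subset_univ B)) zero_le

lemma turnProb_le_card_div {w : V → V → ℝ≥0} {F B : Finset V} {N : ℝ≥0} (hN : 0 < N)
    (hout : ∀ u ∉ F, ∀ x ∈ F, w u x ≤ 1) (hin : ∀ x ∈ F, ∃ u, N ≤ w u x)
    (hBF : Disjoint B F) {x : V} (hx : x ∈ F) :
    turnProb w B x ≤ Fintype.card V / N := by
  obtain ⟨u₀, hu₀⟩ := hin x hx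
  have hden : N ≤ ∑ u, w u x :=
    hu₀.trans (single_le_sum (f := fun u => w u x) (fun _ _ => zero_le) (mem_univ u₀))
  have hnum : ∑ u ∈ B, w u x ≤ Fintype.card V :=
    calc ∑ u ∈ B, w u x ≤ ∑ _u ∈ B, (1 : ℝ≥0) :=
          sum_le_sum fun u hu => hout u (disjoint_left.1 hBF hu) x hx
      _ = #B := by simp
      _ ≤ Fintype.card V := by exact_mod_cast card_le_univ B
  exact div_le_div₀ zero_le hnum hN hden

lemma turnProb_fortWeight_le (hN : 0 < N) (hdisj : Disjoint F₁ F₂)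
    (hfort : ∀ x ∈ F₁, ∃ u ∈ F₁, adj u x) {B : Finset V} (hBF : Disjoint B F₁) {x : V}
    (hx : x ∈ F₁) : turnProb (fortWeight adj F₁ F₂ N) B x ≤ Fintype.card V / N := by
  refine turnProb_le_card_div hN (fun u hu y hy => ?_) (fun y hy => ?_) hBF hx
  · have hy₂ : y ∉ F₂ := disjoint_left.1 hdisj hy
    unfold fortWeight
    split_ifs <;> simp_all
  · obtain ⟨u, hu, hadj⟩ := hfort y hy
    exact ⟨u, by simp [fortWeight, hadj, hu, hy]⟩

variable [DecidableEq V]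

lemma sum_state_succ (w : V → V → ℝ≥0) (S : Finset V) (s : Finset (Finset V)) (t : ℕ) :
    ∑ C ∈ s, state w S (t + 1) C = ∑ B, state w S t B * ∑ C ∈ s, stepProb w B C := by
  simp only [state, mul_sum]
  exact sum_comm

lemma sum_stepProb_disjoint (w : V → V → ℝ≥0) {B F : Finset V} (hBF : Disjoint B F) :
    ∑ C with Disjoint C F, stepProb w B C = ∏ x ∈ F, (1 - (turnProb w B x : ℝ≥0∞)) := by
  set p : V → ℝ≥0∞ := fun x => turnProb w B x
  set R := Bᶜ \ F
  have hterm : ∀ t ∈ R.powerset, stepProb w B (B ∪ t) =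
      ((∏ x ∈ t, p x) * ∏ x ∈ R \ t, (1 - p x)) * ∏ x ∈ F, (1 - p x) := by
    intro t ht
    rw [mem_powerset] at ht
    have hcompl : (B ∪ t)ᶜ = (R \ t) ∪ F := by ext; grind [mem_compl, disjoint_left]
    rw [stepProb, if_pos subset_union_left, union_sdiff_cancel_left
      (disjoint_of_subset_right (ht.trans sdiff_subset) disjoint_compl_right), hcompl,
      prod_union (sdiff_disjoint.mono_left sdiff_subset), mul_assoc]
  calc ∑ C with Disjoint C F, stepProb w B C
      = ∑ t ∈ R.powerset, stepProb w B (B ∪ t) := by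
        have hsupp : ∀ C ∈ univ.filter (Disjoint · F), stepProb w B C ≠ 0 → B ⊆ C :=
          fun C _ h => not_not.1 fun hBC => h (if_neg hBC)
        rw [← sum_filter_of_ne hsupp, filter_filter]
        refine sum_nbij' (· \ B) (B ∪ ·) (fun _ h => ?_) (fun _ h => ?_) (fun _ h => ?_)
          (fun _ h => ?_) (fun _ h => ?_)
        all_goals simp only [mem_filter, mem_powerset, mem_univ, true_and] at h ⊢
        · grind [mem_compl, disjoint_left]
        · exact ⟨disjoint_union_left.2 ⟨hBF, disjoint_of_subset_left h sdiff_disjoint⟩,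
            subset_union_left⟩
        · exact union_sdiff_of_subset h.2
        · exact union_sdiff_cancel_left (disjoint_of_subset_right (h.trans sdiff_subset)
            disjoint_compl_right)
        · rw [union_sdiff_of_subset h.2]
    _ = ∑ t ∈ R.powerset, ((∏ x ∈ t, p x) * ∏ x ∈ R \ t, (1 - p x)) * ∏ x ∈ F, (1 - p x) :=
        sum_congr rfl hterm
    _ = (∏ x ∈ R, (p x + (1 - p x))) * ∏ x ∈ F, (1 - p x) := by rw [← sum_mul, prod_add]
    _ = ∏ x ∈ F, (1 - p x) := by
        rw [prod_eq_one fun x _ =>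
          add_tsub_cancel_of_le (ENNReal.coe_le_one_iff.2 (turnProb_le_one w B x)), one_mul]

lemma one_sub_pow_le_sum_state_disjoint (w : V → V → ℝ≥0) {S F : Finset V} {ε : ℝ≥0}
    (hS : Disjoint S F) (hε : ∀ B, Disjoint B F → ∀ x ∈ F, turnProb w B x ≤ ε) :
    ∀ t, (1 - (ε : ℝ≥0∞)) ^ (#F * t) ≤ ∑ C with Disjoint C F, state w S t C
  | 0 => by simp [state, hS]
  | t + 1 =>
    calc (1 - (ε : ℝ≥0∞)) ^ (#F * (t + 1))
        = (1 - (ε : ℝ≥0∞)) ^ (#F * t) * (1 - ε) ^ #F := by rw [mul_add_one, pow_add]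
      _ ≤ (∑ B with Disjoint B F, state w S t B) * (1 - ε) ^ #F := by
          gcongr; exact one_sub_pow_le_sum_state_disjoint w hS hε t
      _ ≤ ∑ B with Disjoint B F, state w S t B * ∑ C with Disjoint C F, stepProb w B C := by
          rw [sum_mul]
          refine sum_le_sum fun B hB => ?_
          have hBF := (mem_filter.1 hB).2
          rw [sum_stepProb_disjoint w hBF, ← prod_const]
          gcongr with x hx
          exact hε B hBF x hx
      _ ≤ ∑ B, state w S t B * ∑ C with Disjoint C F, stepProb w B C :=
          sum_le_sum_of_subset (filter_subset _ _)
      _ = ∑ C with Disjoint C F, state w S (t + 1) C := (sum_state_succ w S _ t).symm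

lemma mul_one_sub_pow_le_ept (w : V → V → ℝ≥0) {S F : Finset V} {ε : ℝ≥0}
    (hS : Disjoint S F) (hF : F.Nonempty)
    (hε : ∀ B, Disjoint B F → ∀ x ∈ F, turnProb w B x ≤ ε) (k : ℕ) :
    (k + 1) * (1 - (ε : ℝ≥0∞)) ^ (Fintype.card V * k) ≤ ept w S := by
  have hmiss : ∀ C : Finset V, Disjoint C F → C ≠ univ := fun C hC hCu =>
    hF.elim fun x hx => disjoint_left.1 hC (hCu ▸ mem_univ x) hx
  calc (k + 1) * (1 - (ε : ℝ≥0∞)) ^ (Fintype.card V * k)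
      = ∑ _t ∈ range (k + 1), (1 - (ε : ℝ≥0∞)) ^ (Fintype.card V * k) := by simp
    _ ≤ ∑ t ∈ range (k + 1), ∑ C with Disjoint C F, state w S t C :=
        sum_le_sum fun t ht => (pow_le_pow_of_le_one zero_le tsub_le_self
          (Nat.mul_le_mul (card_le_univ F) (mem_range_succ_iff.1 ht))).trans
          (one_sub_pow_le_sum_state_disjoint w hS hε t)
    _ ≤ ∑ t ∈ range (k + 1), ∑ C with C ≠ univ, state w S t C :=
        sum_le_sum fun t _ =>
          sum_le_sum_of_subset (monotone_filter_right _ fun C _ => hmiss C)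
    _ ≤ ept w S := ENNReal.sum_le_tsum _

lemma mul_one_sub_pow_le_ept_fortWeight (hN : 0 < N) (hdisj : Disjoint F₁ F₂)
    (hne : F₁.Nonempty) (hfort : ∀ x ∈ F₁, ∃ u ∈ F₁, adj u x) {v : V} (hv : v ∉ F₁) (k : ℕ) :
    (k + 1) * (1 - ((Fintype.card V / N : ℝ≥0) : ℝ≥0∞)) ^ (Fintype.card V * k) ≤
      ept (fortWeight adj F₁ F₂ N) {v} :=
  mul_one_sub_pow_le_ept _ (disjoint_singleton_left.2 hv) hne
    (fun _ hB _ hx => turnProb_fortWeight_le hN hdisj hfort hB hx) k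

lemma eventually_lt_mul_one_sub_div_pow (k m : ℕ) (c : ℝ≥0) :
    ∀ᶠ N : ℕ in atTop, (k : ℝ≥0∞) < (k + 1) * (1 - ((c / N : ℝ≥0) : ℝ≥0∞)) ^ m := by
  have hlim : Tendsto (fun N : ℕ => ((k : ℝ≥0) + 1) * (1 - c / N) ^ m) atTop
      (𝓝 ((k + 1) * (1 - 0) ^ m)) :=
    tendsto_const_nhds.mul
      ((tendsto_const_nhds.sub (tendsto_const_div_atTop_nhds_zero_nat c)).pow m)
  filter_upwards [hlim.eventually_const_lt (u := (k : ℝ≥0)) (by simp)] with N hN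
  exact_mod_cast hN

end RZF

theorem rzf_forts_arbitrarily_slow_general {V : Type*} [Fintype V] [DecidableEq V]
    (adj : V → V → Prop)
    (F₁ F₂ : Finset V) (h1 : F₁.Nonempty) (h2 : F₂.Nonempty)
    (hdisj : Disjoint F₁ F₂)
    (hf1 : ∀ x ∈ F₁, ∃ u ∈ F₁, adj u x)
    (hf2 : ∀ x ∈ F₂, ∃ u ∈ F₂, adj u x) :
    ∀ k : ℕ, ∃ w : V → V → ℝ≥0,
      (∀ u v : V, 0 < w u v ↔ adj u v) ∧ (k : ℝ≥0∞) < RZF.eptMin w := by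
  intro k
  obtain ⟨N, hslow, hN⟩ := ((RZF.eventually_lt_mul_one_sub_div_pow k (Fintype.card V * k)
    (Fintype.card V)).and (Filter.eventually_gt_atTop 0)).exists
  have hN₀ : (0 : ℝ≥0) < N := Nat.cast_pos.2 hN
  refine ⟨RZF.fortWeight adj F₁ F₂ N, RZF.fortWeight_pos_iff hN₀,
    hslow.trans_le (le_iInf fun v => ?_)⟩
  by_cases hv : v ∈ F₁
  · rw [RZF.fortWeight_comm]
    exact RZF.mul_one_sub_pow_le_ept_fortWeight hN₀ hdisj.symm h2 hf2
      (Finset.disjoint_left.1 hdisj hv) k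
  · exact RZF.mul_one_sub_pow_le_ept_fortWeight hN₀ hdisj h1 hf1 hv k

/-- Let `G` be a strongly connected directed graph
containing two vertex-disjoint forts `F₁, F₂` (a fort is a nonempty vertex set
each of whose vertices has an in-neighbor in the set). Then for every `k`
there is an assignment of positive weights to the edges of `G` under which the
minimum expected propagation time exceeds `k`. -/
theorem rzf_forts_arbitrarily_slow {V : Type*} [Fintype V] [DecidableEq V]
    (adj : V → V → Prop)
    (hsc : ∀ u v : V, Relation.ReflTransGen adj u v)
    (F₁ F₂ : Finset V) (h1 : F₁.Nonempty) (h2 : F₂.Nonempty)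
    (hdisj : Disjoint F₁ F₂)
    (hf1 : ∀ x ∈ F₁, ∃ u ∈ F₁, adj u x)
    (hf2 : ∀ x ∈ F₂, ∃ u ∈ F₂, adj u x) :
    ∀ k : ℕ, ∃ w : V → V → ℝ≥0,
      (∀ u v : V, 0 < w u v ↔ adj u v) ∧ (k : ℝ≥0∞) < RZF.eptMin w :=
  rzf_forts_arbitrarily_slow_general adj F₁ F₂ h1 h2 hdisj hf1 hf2
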